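/- Let A₀ be an n×n real matrix and P₀ symmetric positive definite with P₀A₀ + A₀ᵀP₀ = −I. Then ‖e^{A₀t}‖ ≤ k·e^{−λt} for all t ≥ 0, where k = √(n·λ̄(P₀)/λ̲(P₀)), λ = 1/(2λ̄(P₀)), and ‖·‖ is the operator (spectral) norm. -/

import Mathlib

open Matrix

attribute [local instance] Matrix.frobeniusNormedAddCommGroup Matrix.frobeniusNormedSpace
  Matrix.frobeniusNormedRing Matrix.frobeniusNormedAlgebra

/-- The spectral (operator 2-) norm of a real matrix. -/
noncomputable def spec {m n : ℕ} (M : Matrix (Fin m) (Fin n) ℝ) : ℝ :=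
  ‖LinearMap.toContinuousLinearMap (Matrix.toEuclideanLin M)‖

/-!
`V x = ⟪x, P₀ x⟫` is a Lyapunov function for `ẋ = A₀ x`: along a trajectory the Lyapunov
equation gives `V' = -‖x‖² ≤ -V / λ̄(P₀)`, so by Grönwall `V` decays like `e^{-t/λ̄(P₀)}`.
Sandwiching `λ̲(P₀) ‖x‖² ≤ V x ≤ λ̄(P₀) ‖x‖²` then gives
`‖e^{A₀t} x‖ ≤ √(λ̄(P₀)/λ̲(P₀)) e^{-t/(2λ̄(P₀))} ‖x‖`, which is sharper than the claim by the
factor `√n ≥ 1`.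
-/

open NormedSpace ContinuousLinearMap
open scoped RealInnerProductSpace

theorem le_mul_exp_of_hasDerivAt_le_mul {V V' : ℝ → ℝ} {K t : ℝ}
    (hV : ∀ s, HasDerivAt V (V' s) s) (bound : ∀ s, 0 ≤ s → V' s ≤ K * V s) (ht : 0 ≤ t) :
    V t ≤ V 0 * Real.exp (K * t) := by
  have := le_gronwallBound_of_liminf_deriv_right_le (δ := V 0) (ε := 0)
    (fun s _ => (hV s).continuousAt.continuousWithinAt)
    (fun s _ _ hr => (hV s).hasDerivWithinAt.liminf_right_slope_le hr) le_rfl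
    (fun s hs => by simpa using bound s hs.1) t ⟨ht, le_rfl⟩
  simpa [gronwallBound_ε0] using this

section Lyapunov

variable {E : Type*} [NormedAddCommGroup E] [InnerProductSpace ℝ E] [CompleteSpace E]
  {A P : E →L[ℝ] E}

theorem hasDerivAt_exp_smul_apply (A : E →L[ℝ] E) (x : E) (s : ℝ) :
    HasDerivAt (fun s : ℝ => exp (s • A) x) (A (exp (s • A) x)) s :=
  (apply ℝ E x).hasFDerivAt.comp_hasDerivAt s (hasDerivAt_exp_smul_const' A s)

theorem hasDerivAt_inner_apply_of_lyapunov (hlyap : P * A + adjoint A * P = -1) {f : ℝ → E}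
    {s : ℝ} (hf : HasDerivAt f (A (f s)) s) :
    HasDerivAt (fun s => ⟪f s, P (f s)⟫) (-‖f s‖ ^ 2) s := by
  refine (hf.inner ℝ (P.hasFDerivAt.comp_hasDerivAt s hf)).congr_deriv ?_
  have h := congr($hlyap (f s))
  simp only [_root_.add_apply, mul_apply_eq_comp, _root_.neg_apply, one_apply_eq_self] at h
  rw [Function.comp_apply, ← adjoint_inner_right A, ← inner_add_right, h, inner_neg_right,
    real_inner_self_eq_norm_sq]

theorem inner_exp_smul_apply_le_of_lyapunov (hlyap : P * A + adjoint A * P = -1) {M : ℝ}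
    (hM : 0 < M) (hPM : ∀ x, ⟪x, P x⟫ ≤ M * ‖x‖ ^ 2) (x : E) {t : ℝ} (ht : 0 ≤ t) :
    ⟪exp (t • A) x, P (exp (t • A) x)⟫ ≤ ⟪x, P x⟫ * Real.exp (-M⁻¹ * t) := by
  have hV s := hasDerivAt_inner_apply_of_lyapunov hlyap (hasDerivAt_exp_smul_apply A x s)
  have := le_mul_exp_of_hasDerivAt_le_mul hV (K := -M⁻¹) (fun s _ => ?_) ht
  · simpa using this
  rw [neg_mul, neg_le_neg_iff, inv_mul_le_iff₀ hM]
  exact hPM _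

theorem norm_exp_smul_le_of_lyapunov (hlyap : P * A + adjoint A * P = -1) {m M : ℝ}
    (hm : 0 < m) (hM : 0 < M) (hPm : ∀ x, m * ‖x‖ ^ 2 ≤ ⟪x, P x⟫)
    (hPM : ∀ x, ⟪x, P x⟫ ≤ M * ‖x‖ ^ 2) {t : ℝ} (ht : 0 ≤ t) :
    ‖exp (t • A)‖ ≤ √(M / m) * Real.exp (-(1 / (2 * M)) * t) := by
  set K := √(M / m) * Real.exp (-(1 / (2 * M)) * t)
  refine opNorm_le_bound _ (by positivity) fun x => ?_
  have hsq : m * ‖exp (t • A) x‖ ^ 2 ≤ m * (K * ‖x‖) ^ 2 :=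
    calc m * ‖exp (t • A) x‖ ^ 2 ≤ ⟪x, P x⟫ * Real.exp (-M⁻¹ * t) :=
          (hPm _).trans (inner_exp_smul_apply_le_of_lyapunov hlyap hM hPM x ht)
      _ ≤ M * ‖x‖ ^ 2 * Real.exp (-M⁻¹ * t) := by gcongr; exact hPM x
      _ = m * (K * ‖x‖) ^ 2 := by
          rw [mul_pow, mul_pow, Real.sq_sqrt (by positivity), ← Real.exp_nat_mul]
          field_simp
          ring_nf
  exact (pow_le_pow_iff_left₀ (norm_nonneg _) (by positivity) two_ne_zero).mp
    (le_of_mul_le_mul_left hsq hm)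

end Lyapunov

namespace Matrix

theorem toEuclideanCLM_exp {n 𝕜 : Type*} [RCLike 𝕜] [Fintype n] [DecidableEq n]
    (A : Matrix n n 𝕜) : toEuclideanCLM (𝕜 := 𝕜) (exp A) = exp (toEuclideanCLM (𝕜 := 𝕜) A) :=
  map_exp (toEuclideanCLM (n := n) (𝕜 := 𝕜))
    (toEuclideanCLM (n := n) (𝕜 := 𝕜)).toAlgEquiv.toLinearMap.continuous_of_finiteDimensional A

theorem PosDef.iInf_eigenvalues_pos {n : Type*} [Fintype n] [DecidableEq n] [Nonempty n]
    {A : Matrix n n ℝ} (hA : A.PosDef) : 0 < ⨅ i, hA.1.eigenvalues i := by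
  obtain ⟨i, hi⟩ := exists_eq_ciInf_of_finite (f := hA.1.eigenvalues)
  exact hi ▸ hA.eigenvalues_pos i

namespace IsHermitian

variable {n : Type*} [Fintype n] [DecidableEq n] {A : Matrix n n ℝ} (hA : A.IsHermitian)
include hA

theorem toEuclideanCLM_eigenvectorBasis (i : n) :
    toEuclideanCLM (𝕜 := ℝ) A (hA.eigenvectorBasis i) =
      hA.eigenvalues i • hA.eigenvectorBasis i :=
  WithLp.ofLp_injective 2 (hA.mulVec_eigenvectorBasis i)

theorem eigenvectorBasis_repr_toEuclideanCLM_apply (x : EuclideanSpace ℝ n) (i : n) :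
    hA.eigenvectorBasis.repr (toEuclideanCLM (𝕜 := ℝ) A x) i =
      hA.eigenvalues i * hA.eigenvectorBasis.repr x i := by
  have hsa : adjoint (toEuclideanCLM (𝕜 := ℝ) A) = toEuclideanCLM (𝕜 := ℝ) A := by
    rw [← star_eq_adjoint, ← map_star, star_eq_conjTranspose, hA.eq]
  rw [OrthonormalBasis.repr_apply_apply, OrthonormalBasis.repr_apply_apply,
    ← adjoint_inner_left, hsa, hA.toEuclideanCLM_eigenvectorBasis, real_inner_smul_left]

theorem inner_toEuclideanCLM_self (x : EuclideanSpace ℝ n) :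
    ⟪x, toEuclideanCLM (𝕜 := ℝ) A x⟫ =
      ∑ i, hA.eigenvalues i * hA.eigenvectorBasis.repr x i ^ 2 := by
  rw [← hA.eigenvectorBasis.repr.inner_map_map, PiLp.inner_apply]
  refine Finset.sum_congr rfl fun i _ => ?_
  rw [hA.eigenvectorBasis_repr_toEuclideanCLM_apply, RCLike.inner_apply, conj_trivial]
  ring

theorem norm_sq_eq_sum_eigenvectorBasis_repr (x : EuclideanSpace ℝ n) :
    ‖x‖ ^ 2 = ∑ i, hA.eigenvectorBasis.repr x i ^ 2 := by
  rw [← hA.eigenvectorBasis.repr.norm_map, EuclideanSpace.norm_sq_eq]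
  simp

theorem inner_toEuclideanCLM_self_le (x : EuclideanSpace ℝ n) :
    ⟪x, toEuclideanCLM (𝕜 := ℝ) A x⟫ ≤ (⨆ i, hA.eigenvalues i) * ‖x‖ ^ 2 := by
  rw [hA.inner_toEuclideanCLM_self, hA.norm_sq_eq_sum_eigenvectorBasis_repr, Finset.mul_sum]
  gcongr with i
  exact le_ciSup (Set.finite_range _).bddAbove i

theorem iInf_eigenvalues_mul_le_inner_toEuclideanCLM_self (x : EuclideanSpace ℝ n) :
    (⨅ i, hA.eigenvalues i) * ‖x‖ ^ 2 ≤ ⟪x, toEuclideanCLM (𝕜 := ℝ) A x⟫ := by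
  rw [hA.inner_toEuclideanCLM_self, hA.norm_sq_eq_sum_eigenvectorBasis_repr, Finset.mul_sum]
  gcongr with i
  exact ciInf_le (Set.finite_range _).bddBelow i

end IsHermitian

theorem lyapunov_toEuclideanCLM {n : Type*} [Fintype n] [DecidableEq n] {A P : Matrix n n ℝ}
    (hlyap : P * A + Aᵀ * P = -1) :
    toEuclideanCLM (𝕜 := ℝ) P * toEuclideanCLM (𝕜 := ℝ) A +
      adjoint (toEuclideanCLM (𝕜 := ℝ) A) * toEuclideanCLM (𝕜 := ℝ) P = -1 := by
  rw [← star_eq_adjoint, ← map_star, star_eq_conjTranspose, conjTranspose_eq_transpose_of_trivial,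
    ← map_mul, ← map_mul, ← map_add, hlyap, map_neg, map_one]

end Matrix

theorem stmt_4_general (n : ℕ) (A₀ P₀ : Matrix (Fin n) (Fin n) ℝ)
    (hP : P₀.PosDef) (hlyap : P₀ * A₀ + A₀ᵀ * P₀ = -1) :
    ∀ t : ℝ, 0 ≤ t →
      spec (NormedSpace.exp (t • A₀)) ≤
        Real.sqrt ((n : ℝ) * (⨆ i, hP.1.eigenvalues i) / (⨅ i, hP.1.eigenvalues i)) *
          Real.exp (-(1 / (2 * ⨆ i, hP.1.eigenvalues i)) * t) := by
  intro t ht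
  rcases n.eq_zero_or_pos with rfl | hn
  · rw [spec, opNorm_subsingleton]
    positivity
  have : Nonempty (Fin n) := ⟨⟨0, hn⟩⟩
  have hm := hP.iInf_eigenvalues_pos
  have hM : 0 < ⨆ i, hP.1.eigenvalues i :=
    hm.trans_le (ciInf_le_ciSup (Set.finite_range _).bddBelow (Set.finite_range _).bddAbove)
  calc spec (exp (t • A₀))
      = ‖exp (t • toEuclideanCLM (𝕜 := ℝ) A₀)‖ := by
        rw [← map_smul, ← toEuclideanCLM_exp]
        rfl
    _ ≤ √((⨆ i, hP.1.eigenvalues i) / ⨅ i, hP.1.eigenvalues i) *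
          Real.exp (-(1 / (2 * ⨆ i, hP.1.eigenvalues i)) * t) :=
        norm_exp_smul_le_of_lyapunov (lyapunov_toEuclideanCLM hlyap) hm hM
          hP.1.iInf_eigenvalues_mul_le_inner_toEuclideanCLM_self
          hP.1.inner_toEuclideanCLM_self_le ht
    _ ≤ _ := by
        gcongr
        exact le_mul_of_one_le_left hM.le (by exact_mod_cast hn)

theorem stmt_4 (n : ℕ) (hn : 0 < n) (A₀ P₀ : Matrix (Fin n) (Fin n) ℝ)
    (hP : P₀.PosDef) (hlyap : P₀ * A₀ + A₀ᵀ * P₀ = -1) :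
    ∀ t : ℝ, 0 ≤ t →
      spec (NormedSpace.exp (t • A₀)) ≤
        Real.sqrt ((n : ℝ) * (⨆ i, hP.1.eigenvalues i) / (⨅ i, hP.1.eigenvalues i)) *
          Real.exp (-(1 / (2 * ⨆ i, hP.1.eigenvalues i)) * t) :=
  stmt_4_general n A₀ P₀ hP hlyap
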